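/- Let B be the monodromy matrix of a T-periodic linear system with fundamental matrix Q, and suppose B is diagonalizable with eigenvalues ρ_j = e^{ν_j T}. If q'(t) = Q(t)c with c = Σ_j α_j b_j in the eigenbasis of B, and k is the index of the eigenvalue with largest |ρ_j| among those with α_j ≠ 0 (with that modulus achieved by a unique ρ_k among eigenvalues with α_j ≠ 0), then lim_{m→∞} (1/(mT)) log‖q'(mT)‖ = (1/T) log|ρ_k| = Re(ν_k), provided Q(0)-coordinates give b_k-component nonzero. -/

import Mathlib

open Matrix Filter

/-- For a diagonalizable monodromy matrix `B` with eigenpairs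
`(ρⱼ = e^{νⱼT}, bⱼ)` and `c = ∑ⱼ αⱼ bⱼ`, if `k` is the unique dominant index among those
with `αⱼ ≠ 0` (i.e. `|ρⱼ| < |ρₖ|` for every other contributing `j`) and `Q(0)bₖ ≠ 0`, then
`lim_{m→∞} (1/(mT)) log‖q'(mT)‖ = (1/T) log|ρₖ| = Re νₖ`, where `q'(mT) = Q(0)Bᵐc`. -/
theorem floquet_lyapunov_exponent_dominant_multiplier
    {N : ℕ} (Q : ℝ → Matrix (Fin N) (Fin N) ℂ) (B : Matrix (Fin N) (Fin N) ℂ)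
    (T : ℝ) (hT : 0 < T)
    (hmono : ∀ t, Q (t + T) = Q t * B)
    (b : Fin N → (Fin N → ℂ)) (ν : Fin N → ℂ) (ρ : Fin N → ℂ) (α : Fin N → ℂ)
    (hρ : ∀ j, ρ j = Complex.exp (ν j * T))
    (hB : ∀ j, B.mulVec (b j) = ρ j • b j)
    (hbasis : LinearIndependent ℂ b)
    (k : Fin N) (hk : α k ≠ 0)
    (hdom : ∀ j, α j ≠ 0 → j ≠ k → ‖ρ j‖ < ‖ρ k‖)
    (hQ0 : (Q 0).mulVec (b k) ≠ 0)
    (c : Fin N → ℂ) (hc : c = ∑ j, α j • b j) :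
    Tendsto (fun m : ℕ =>
        (1 / (m * T)) * Real.log ‖(Q 0).mulVec ((B ^ m).mulVec c)‖)
      atTop (nhds ((ν k).re)) ∧
    (1 / T) * Real.log ‖ρ k‖ = (ν k).re := by
  have hρk0 : ρ k ≠ 0 := by rw [hρ]; exact Complex.exp_ne_zero _
  have habs : (0:ℝ) < ‖ρ k‖ := by
    simpa [norm_pos_iff] using hρk0
  -- log |ρ k| = Re ν k * T
  have hRe : Real.log ‖ρ k‖ = (ν k).re * T := by
    rw [hρ, Complex.norm_exp, Real.log_exp]
    simp [Complex.mul_re]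
  have hsecond : (1 / T) * Real.log ‖ρ k‖ = (ν k).re := by
    rw [hRe]; field_simp
  refine ⟨?_, hsecond⟩
  set v : Fin N → (Fin N → ℂ) := fun j => (Q 0).mulVec (b j) with hv
  -- eigenvector power formula
  have hpow : ∀ (m : ℕ) j, (B ^ m).mulVec (b j) = ρ j ^ m • b j := by
    intro m j
    induction m with
    | zero => simp
    | succ n ih =>
      rw [pow_succ']
      have : (B * B ^ n).mulVec (b j) = B.mulVec ((B ^ n).mulVec (b j)) := by
        rw [Matrix.mulVec_mulVec]
      rw [this, ih, Matrix.mulVec_smul, hB, smul_smul, pow_succ', mul_comm]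
  have hsum : ∀ (A : Matrix (Fin N) (Fin N) ℂ) (f : Fin N → (Fin N → ℂ)),
      A.mulVec (∑ j, f j) = ∑ j, A.mulVec (f j) := fun A f =>
    map_sum A.mulVecLin f Finset.univ
  have hsmul : ∀ (A : Matrix (Fin N) (Fin N) ℂ) (a : ℂ) (w : Fin N → ℂ),
      A.mulVec (a • w) = a • A.mulVec w := fun A a w =>
    map_smul A.mulVecLin a w
  have hF : ∀ m : ℕ, (Q 0).mulVec ((B ^ m).mulVec c) = ∑ j, (α j * ρ j ^ m) • v j := by
    intro m
    rw [hc, hsum, hsum]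
    refine Finset.sum_congr rfl fun j _ => ?_
    rw [hsmul, hpow, hsmul, hsmul, smul_smul, mul_comm]
  set g : ℕ → (Fin N → ℂ) := fun m => ∑ j, (α j * (ρ j / ρ k) ^ m) • v j with hg
  have hFg : ∀ m : ℕ, (Q 0).mulVec ((B ^ m).mulVec c) = (ρ k ^ m) • g m := by
    intro m
    rw [hF, hg, Finset.smul_sum]
    refine Finset.sum_congr rfl fun j _ => ?_
    rw [smul_smul]
    congr 1
    rw [mul_left_comm, ← mul_pow, mul_div_assoc', mul_comm (ρ k), mul_div_assoc, div_self hρk0, mul_one]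
  set L : Fin N → ℂ := α k • v k with hL
  have hLne : L ≠ 0 := by
    rw [hL]
    exact smul_ne_zero hk hQ0
  have hLpos : (0:ℝ) < ‖L‖ := norm_pos_iff.mpr hLne
  have hgL : Tendsto g atTop (nhds L) := by
    have : Tendsto g atTop (nhds (∑ j, if j = k then α k • v k else 0)) := by
      apply tendsto_finset_sum
      intro j _
      by_cases hjk : j = k
      · subst hjk
        simp only [if_pos rfl]
        have : ∀ m : ℕ, (α j * (ρ j / ρ j) ^ m) • v j = α j • v j := by
          intro m; rw [div_self hρk0, one_pow, mul_one]
        simp only [this]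
        exact tendsto_const_nhds
      · simp only [if_neg hjk]
        by_cases hαj : α j = 0
        · simp only [hαj, zero_mul, zero_smul]
          exact tendsto_const_nhds
        · have hlt : ‖ρ j / ρ k‖ < 1 := by
            rw [norm_div]
            rw [div_lt_one (by simpa using habs)]
            simpa using hdom j hαj hjk
          have h0 : Tendsto (fun m : ℕ => (ρ j / ρ k) ^ m) atTop (nhds 0) :=
            tendsto_pow_atTop_nhds_zero_of_norm_lt_one hlt
          have : Tendsto (fun m : ℕ => (α j * (ρ j / ρ k) ^ m) • v j) atTop
              (nhds ((α j * 0) • v j)) := by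
            apply Tendsto.smul_const
            exact Tendsto.const_mul _ h0
          simpa using this
    simpa [Finset.sum_ite_eq'] using this
  have hgnorm : Tendsto (fun m => ‖g m‖) atTop (nhds ‖L‖) := hgL.norm
  have hlogg : Tendsto (fun m => Real.log ‖g m‖) atTop (nhds (Real.log ‖L‖)) :=
    (Real.continuousAt_log (ne_of_gt hLpos)).tendsto.comp hgnorm
  -- 1/(m T) → 0
  have hmT : Tendsto (fun m : ℕ => (1:ℝ) / (m * T)) atTop (nhds 0) := by
    have h1 : Tendsto (fun m : ℕ => (m:ℝ) * T) atTop atTop :=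
      Tendsto.atTop_mul_const hT tendsto_natCast_atTop_atTop
    have h2 : Tendsto (fun m : ℕ => ((m:ℝ) * T)⁻¹) atTop (nhds 0) := h1.inv_tendsto_atTop
    simpa only [one_div] using h2
  have hsmall : Tendsto (fun m : ℕ => (1 / ((m:ℝ) * T)) * Real.log ‖g m‖) atTop (nhds 0) := by
    have := hmT.mul hlogg
    simpa using this
  -- eventual positivity of ‖g m‖
  have hev : ∀ᶠ m : ℕ in atTop, 0 < ‖g m‖ :=
    hgnorm.eventually (eventually_gt_nhds hLpos)
  have hev1 : ∀ᶠ m : ℕ in atTop, 1 ≤ m := eventually_ge_atTop 1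
  have key : ∀ᶠ m : ℕ in atTop,
      (1 / ((m:ℝ) * T)) * Real.log ‖(Q 0).mulVec ((B ^ m).mulVec c)‖
        = (ν k).re + (1 / ((m:ℝ) * T)) * Real.log ‖g m‖ := by
    filter_upwards [hev, hev1] with m hgm hm1
    have hm0 : (m:ℝ) ≠ 0 := Nat.cast_ne_zero.mpr (by omega)
    rw [hFg]
    have hnorm : ‖(ρ k ^ m) • g m‖ = ‖ρ k‖ ^ m * ‖g m‖ := by
      rw [norm_smul, norm_pow]
    rw [hnorm, Real.log_mul (by positivity) (ne_of_gt hgm), Real.log_pow]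
    rw [mul_add]
    congr 1
    rw [hRe]
    field_simp
  have hlim : Tendsto (fun m : ℕ => (ν k).re + (1 / ((m:ℝ) * T)) * Real.log ‖g m‖)
      atTop (nhds ((ν k).re)) := by
    have := (tendsto_const_nhds (x := (ν k).re) (f := atTop (α := ℕ))).add hsmall
    simpa using this
  exact Tendsto.congr' (key.mono fun m hm => hm.symm) hlim
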